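/- arXiv:1902.10369 — 6 statements merged into one kernel-verified Lean document; each statement's English description precedes it below -/
import Mathlib

section
/- If S < (log(1/δ))/(6c · log log(1/δ)) and δ ∈ (0, 1/4), then (1/S − δ)^{3cS} > δ. In particular, ((6c · log log(1/δ))/(2 log(1/δ)))^{(log(1/δ))/(log log(1/δ))} > δ. -/
open Real

/-- the numerical estimate concluding the randomized lower bound:
if `S < log(1/δ)/(6c·log log(1/δ))` (with `δ < 1/4`, `c ≥ 2`, and `1/S - δ ≥ 1/(2S)`),
then `(1/S - δ)^(3cS) > δ`; in particular
`((6c·log log(1/δ))/(2 log(1/δ)))^(log(1/δ)/log log(1/δ)) > δ`. -/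
theorem randomized_timer_numeric_bound
    (c δ : ℝ) (S : ℕ) (hc : 2 ≤ c) (hδ0 : 0 < δ) (hδ : δ < 1 / 4)
    (hS : 0 < S)
    (hSsmall : (S : ℝ) < Real.log (1 / δ) / (6 * c * Real.log (Real.log (1 / δ))))
    (hhalf : 1 / (2 * (S : ℝ)) ≤ 1 / (S : ℝ) - δ) :
    δ < (1 / (S : ℝ) - δ) ^ (3 * c * (S : ℝ)) ∧
    δ < ((6 * c * Real.log (Real.log (1 / δ))) / (2 * Real.log (1 / δ)))
          ^ (Real.log (1 / δ) / Real.log (Real.log (1 / δ))) := by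
  set L := Real.log (1 / δ) with hLdef
  set LL := Real.log L with hLLdef
  have hcpos : (0:ℝ) < c := by linarith
  have h4 : (4:ℝ) < 1 / δ := by rw [lt_div_iff₀ hδ0]; linarith
  have hlog4 : Real.log 4 = 2 * Real.log 2 := by
    rw [show (4:ℝ) = 2 ^ (2:ℕ) by norm_num, Real.log_pow]; push_cast; ring
  have hL1 : (1.386:ℝ) < L := by
    have h := Real.log_lt_log (by norm_num : (0:ℝ) < 4) h4
    have h2 := Real.log_two_gt_d9
    rw [hlog4] at h
    rw [hLdef]; linarith
  have hLpos : (0:ℝ) < L := by linarith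
  have hLLpos : 0 < LL := Real.log_pos (by linarith)
  have hexp6 : Real.exp ((1:ℝ)/6) < 1.2 := by
    have h6 : Real.exp ((1:ℝ)/6) ^ (6:ℕ) = Real.exp 1 := by
      rw [← Real.exp_nat_mul]; norm_num
    nlinarith [Real.exp_pos ((1:ℝ)/6), Real.exp_one_lt_d9, h6,
      sq_nonneg (Real.exp ((1:ℝ)/6)), sq_nonneg (Real.exp ((1:ℝ)/6) - 1.2),
      sq_nonneg (Real.exp ((1:ℝ)/6) ^ 2 - 1.44)]
  have hLL6 : (1:ℝ)/6 < LL := by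
    rw [hLLdef, Real.lt_log_iff_exp_lt hLpos]
    linarith
  have hSpos : (0:ℝ) < (S:ℝ) := by exact_mod_cast hS
  have hS1 : (1:ℝ) ≤ (S:ℝ) := by exact_mod_cast hS
  have h6cLL : (0:ℝ) < 6 * c * LL := by positivity
  have hS6 : (S:ℝ) * (6 * c * LL) < L := (lt_div_iff₀ h6cLL).mp hSsmall
  have h6c2 : (2:ℝ) < 6 * c * LL := by nlinarith
  have h2S : (2:ℝ) * (S:ℝ) < L ^ 2 := by nlinarith
  have hlog2S : Real.log (2 * (S:ℝ)) < 2 * LL := by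
    have h := Real.log_lt_log (by positivity) h2S
    rwa [show L ^ 2 = L ^ (2:ℕ) by norm_num, Real.log_pow, hLLdef.symm,
      Nat.cast_ofNat] at h
  have hlog2Spos : 0 < Real.log (2 * (S:ℝ)) := Real.log_pos (by linarith)
  have hkey : 3 * c * (S:ℝ) * Real.log (2 * (S:ℝ)) < L := by
    have h3cS : (0:ℝ) < 3 * c * (S:ℝ) := by positivity
    nlinarith
  have hδeq : Real.exp (-L) = δ := by
    rw [hLdef, one_div, Real.log_inv, neg_neg, Real.exp_log hδ0]
  have hbase : (0:ℝ) < 1 / (2 * (S:ℝ)) := by positivity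
  have hexpnn : (0:ℝ) ≤ 3 * c * (S:ℝ) := by positivity
  have e1 : δ < (1 / (2 * (S:ℝ))) ^ (3 * c * (S:ℝ)) := by
    rw [Real.rpow_def_of_pos hbase, ← hδeq]
    apply Real.exp_lt_exp.mpr
    rw [one_div, Real.log_inv]
    nlinarith
  constructor
  · exact lt_of_lt_of_le e1 (Real.rpow_le_rpow (le_of_lt hbase) hhalf hexpnn)
  · have hx : (0:ℝ) < 6 * c * LL / (2 * L) := by positivity
    have hxgt : Real.exp (-LL) < 6 * c * LL / (2 * L) := by
      have he : Real.exp (-LL) = 1 / L := by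
        rw [hLLdef, Real.exp_neg, Real.exp_log hLpos, one_div]
      rw [he, div_lt_div_iff₀ hLpos (by positivity)]
      have hm := mul_lt_mul_of_pos_right h6c2 hLpos
      linarith
    have hlogx : -LL < Real.log (6 * c * LL / (2 * L)) := by
      have h := Real.log_lt_log (Real.exp_pos _) hxgt
      rwa [Real.log_exp] at h
    rw [Real.rpow_def_of_pos hx, ← hδeq]
    apply Real.exp_lt_exp.mpr
    have hq : 0 < L / LL := by positivity
    have hcancel : L / LL * LL = L := div_mul_cancel₀ L (ne_of_gt hLLpos)
    have hm := mul_lt_mul_of_pos_left hlogx hq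
    rw [mul_neg, hcancel] at hm
    linarith [hm, mul_comm (L / LL) (Real.log (6 * c * LL / (2 * L)))]
end

section
/- In Morris-style approximate counting with base α > 1 where the counter z is incremented upon each event with probability 1/(1 + α^z), starting from z = c with α^c = 1/δ + 1: after n ≥ s events (where s = 1/(δ(α−1))), the expectation satisfies n(α−1)(1−δ) + 1 ≤ E[α^{z_n}] ≤ n(α−1) + 1. More precisely, E[α^{z_n}] = E[α^{z_{n−1}}] + (α−1)·E[α^{z_{n−1}}/(1+α^{z_{n−1}})]. -/
/-! Writing `E_n = E[α^{z_n}]`, one step of the counter changes `α^z` by `α^{z+1} - α^z` with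
probability `1/(1+α^z)`, which gives the recursion `E_{n+1} = E_n + (α-1)·E[α^z/(1+α^z)]`.
The weight `α^z/(1+α^z)` lies in `[1-δ, 1]` because the counter never drops below `c` and
`α^c ≥ 1/δ`, so `E_n` grows by between `(α-1)(1-δ)` and `α-1` per step. Starting from
`E_s = α^c = s(α-1) + 1` this gives both bounds. -/

open Finset

theorem sum_mul_pow_succ_of_step {α : ℝ} (hα : 0 ≤ α) {p p' : ℕ → ℝ} {N : ℕ}
    (hstep : ∀ k, p' k = (if k = 0 then 0 else p (k - 1) * (1 / (α ^ (k - 1) + 1)))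
      + p k * (1 - 1 / (α ^ k + 1)))
    (hN : p N = 0) :
    ∑ k ∈ range (N + 1), p' k * α ^ k
      = ∑ j ∈ range N, p j * α ^ j + (α - 1) * ∑ j ∈ range N, p j * (α ^ j / (1 + α ^ j)) := by
  have hmoved : ∑ k ∈ range (N + 1),
      (if k = 0 then 0 else p (k - 1) * (1 / (α ^ (k - 1) + 1))) * α ^ k
      = ∑ j ∈ range N, p j * (1 / (α ^ j + 1)) * α ^ (j + 1) := by
    simp [sum_range_succ']
  have hstayed : ∑ k ∈ range (N + 1), p k * (1 - 1 / (α ^ k + 1)) * α ^ k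
      = ∑ j ∈ range N, p j * (1 - 1 / (α ^ j + 1)) * α ^ j := by
    simp [sum_range_succ, hN]
  simp_rw [hstep, add_mul, sum_add_distrib, hmoved, hstayed, mul_sum, ← sum_add_distrib]
  refine sum_congr rfl fun j _ => ?_
  have hpos : 0 < α ^ j + 1 := by positivity
  field_simp
  ring

theorem one_sub_le_div_one_add {x δ : ℝ} (hδ : 0 < δ) (hx : 1 / δ ≤ x) :
    1 - δ ≤ x / (1 + x) := by
  have hx0 : 0 < x := lt_of_lt_of_le (by positivity) hx
  rw [le_div_iff₀ (by positivity)]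
  have : 1 ≤ δ * x := by rwa [div_le_iff₀' hδ] at hx
  nlinarith

theorem le_sum_mul_of_le {ι : Type*} {s : Finset ι} {w f : ι → ℝ} {m : ℝ}
    (hw : ∀ i ∈ s, 0 ≤ w i) (hsum : ∑ i ∈ s, w i = 1) (hf : ∀ i ∈ s, w i ≠ 0 → m ≤ f i) :
    m ≤ ∑ i ∈ s, w i * f i := by
  calc m = ∑ i ∈ s, w i * m := by rw [← sum_mul, hsum, one_mul]
    _ ≤ ∑ i ∈ s, w i * f i := by
      refine sum_le_sum fun i hi => ?_
      by_cases hwi : w i = 0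
      · simp [hwi]
      · exact mul_le_mul_of_nonneg_left (hf i hi hwi) (hw i hi)

theorem sum_mul_le_of_le {ι : Type*} {s : Finset ι} {w f : ι → ℝ} {M : ℝ}
    (hw : ∀ i ∈ s, 0 ≤ w i) (hsum : ∑ i ∈ s, w i = 1) (hf : ∀ i ∈ s, f i ≤ M) :
    ∑ i ∈ s, w i * f i ≤ M := by
  calc ∑ i ∈ s, w i * f i ≤ ∑ i ∈ s, w i * M :=
        sum_le_sum fun i hi => mul_le_mul_of_nonneg_left (hf i hi) (hw i hi)
    _ = M := by rw [← sum_mul, hsum, one_mul]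

theorem add_mul_le_of_add_le_succ {a : ℕ → ℝ} {m : ℝ} {s : ℕ}
    (h : ∀ n, s ≤ n → a n + m ≤ a (n + 1)) : ∀ n, s ≤ n → a s + (n - s) * m ≤ a n := by
  intro n hn
  induction n, hn using Nat.le_induction with
  | base => simp
  | succ n hn ih => push_cast; linarith [h n hn]

theorem le_add_mul_of_succ_le_add {a : ℕ → ℝ} {M : ℝ} {s : ℕ}
    (h : ∀ n, s ≤ n → a (n + 1) ≤ a n + M) : ∀ n, s ≤ n → a n ≤ a s + (n - s) * M := by
  intro n hn
  induction n, hn using Nat.le_induction with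
  | base => simp
  | succ n hn ih => push_cast; linarith [h n hn]

theorem morris_counter_expectation_general
    (α δ : ℝ) (s c : ℕ) (q : ℕ → ℕ → ℝ)
    (hα : 1 < α) (hδ0 : 0 < δ)
    (hs : (s : ℝ) = 1 / (δ * (α - 1)))
    (hcval : α ^ c = 1 / δ + 1)
    (hinit : ∀ j, q s j = if j = c then 1 else 0)
    (hrec : ∀ n, s ≤ n → ∀ k,
      q (n + 1) k = (if k = 0 then 0 else q n (k - 1) * (1 / (α ^ (k - 1) + 1)))
        + q n k * (1 - 1 / (α ^ k + 1)))
    (hnn : ∀ n j, 0 ≤ q n j)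
    (hlow : ∀ n j, j < c → q n j = 0)
    (hhigh : ∀ n j, s ≤ n → c + (n - s) < j → q n j = 0)
    (htot : ∀ n, s ≤ n → ∑ j ∈ Finset.range (c + n + 1), q n j = 1) :
    ∀ n, s ≤ n →
      ((∑ j ∈ Finset.range (c + (n + 1) + 1), q (n + 1) j * α ^ j)
          = (∑ j ∈ Finset.range (c + n + 1), q n j * α ^ j)
            + (α - 1) * ∑ j ∈ Finset.range (c + n + 1), q n j * (α ^ j / (1 + α ^ j)))
      ∧ (n : ℝ) * (α - 1) * (1 - δ) + 1 ≤ ∑ j ∈ Finset.range (c + n + 1), q n j * α ^ j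
      ∧ (∑ j ∈ Finset.range (c + n + 1), q n j * α ^ j) ≤ (n : ℝ) * (α - 1) + 1 := by
  have hα1 : 0 < α - 1 := sub_pos.mpr hα
  have hstep : ∀ n, s ≤ n → ∑ j ∈ range (c + (n + 1) + 1), q (n + 1) j * α ^ j
      = ∑ j ∈ range (c + n + 1), q n j * α ^ j
        + (α - 1) * ∑ j ∈ range (c + n + 1), q n j * (α ^ j / (1 + α ^ j)) := fun n hn =>
    sum_mul_pow_succ_of_step (by linarith) (hrec n hn) (hhigh n _ hn (by omega))
  have hweight_le : ∀ n, s ≤ n → ∑ j ∈ range (c + n + 1), q n j * (α ^ j / (1 + α ^ j)) ≤ 1 :=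
    fun n hn => sum_mul_le_of_le (fun j _ => hnn n j) (htot n hn) fun j _ =>
      div_le_one_of_le₀ (by linarith) (by positivity)
  have hweight_ge : ∀ n, s ≤ n →
      1 - δ ≤ ∑ j ∈ range (c + n + 1), q n j * (α ^ j / (1 + α ^ j)) :=
    fun n hn => le_sum_mul_of_le (fun j _ => hnn n j) (htot n hn) fun j _ hj =>
      one_sub_le_div_one_add hδ0 <| calc
        1 / δ ≤ α ^ c := by rw [hcval]; linarith
        _ ≤ α ^ j := pow_le_pow_right₀ hα.le (not_lt.mp (mt (hlow n j) hj))
  have hbase : ∑ j ∈ range (c + s + 1), q s j * α ^ j = s * (α - 1) + 1 := by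
    have hsα : (s : ℝ) * (α - 1) = 1 / δ := by rw [hs]; field_simp [hα1.ne']
    simp [hinit, hsα, hcval]
  intro n hn
  have hlower := add_mul_le_of_add_le_succ (a := fun n => ∑ j ∈ range (c + n + 1), q n j * α ^ j)
    (m := (α - 1) * (1 - δ)) (fun n hn => by
      rw [hstep n hn]; nlinarith [hweight_ge n hn]) n hn
  have hupper := le_add_mul_of_succ_le_add (a := fun n => ∑ j ∈ range (c + n + 1), q n j * α ^ j)
    (M := α - 1) (fun n hn => by
      rw [hstep n hn]; nlinarith [hweight_le n hn]) n hn
  simp only [hbase] at hlower hupper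
  have hslack : 0 ≤ (s : ℝ) * ((α - 1) * δ) := by positivity
  refine ⟨hstep n hn, by linarith, by linarith⟩

/-- Morris-style approximate counting with base `α`: increment probability
`1/(1+α^z)`, started at `z_s = c` with `α^c = 1/δ + 1` and `s = 1/(δ(α-1))`. The distribution
of `z_n` is `q n`. Then `E[α^{z_{n+1}}] = E[α^{z_n}] + (α-1)·E[α^{z_n}/(1+α^{z_n})]`, and
`n(α-1)(1-δ) + 1 ≤ E[α^{z_n}] ≤ n(α-1) + 1` for all `n ≥ s`. -/
theorem morris_counter_expectation
    (α δ : ℝ) (s c : ℕ) (q : ℕ → ℕ → ℝ)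
    (hα : 1 < α) (hδ0 : 0 < δ) (hδ1 : δ < 1)
    (hs : (s : ℝ) = 1 / (δ * (α - 1)))
    (hcval : α ^ c = 1 / δ + 1)
    (hinit : ∀ j, q s j = if j = c then 1 else 0)
    (hrec : ∀ n, s ≤ n → ∀ k,
      q (n + 1) k = (if k = 0 then 0 else q n (k - 1) * (1 / (α ^ (k - 1) + 1)))
        + q n k * (1 - 1 / (α ^ k + 1)))
    (hnn : ∀ n j, 0 ≤ q n j)
    (hlow : ∀ n j, j < c → q n j = 0)
    (hhigh : ∀ n j, s ≤ n → c + (n - s) < j → q n j = 0)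
    (htot : ∀ n, s ≤ n → ∑ j ∈ Finset.range (c + n + 1), q n j = 1) :
    ∀ n, s ≤ n →
      ((∑ j ∈ Finset.range (c + (n + 1) + 1), q (n + 1) j * α ^ j)
          = (∑ j ∈ Finset.range (c + n + 1), q n j * α ^ j)
            + (α - 1) * ∑ j ∈ Finset.range (c + n + 1), q n j * (α ^ j / (1 + α ^ j)))
      ∧ (n : ℝ) * (α - 1) * (1 - δ) + 1 ≤ ∑ j ∈ Finset.range (c + n + 1), q n j * α ^ j
      ∧ (∑ j ∈ Finset.range (c + n + 1), q n j * α ^ j) ≤ (n : ℝ) * (α - 1) + 1 :=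
  morris_counter_expectation_general α δ s c q hα hδ0 hs hcval hinit hrec hnn hlow hhigh htot
end

section
/- Under the Morris-style counter with increment probability 1/(1+α^z), the second moment satisfies E[α^{2z_n}] ≤ E[α^{2z_{n−1}}] + (α² − 1)·E[α^{z_{n−1}}]; more precisely E[α^{2z_n}] = E[α^{2z_{n−1}}] + (α²−1)·E[α^{2z_{n−1}}/(α^{z_{n−1}}+1)]. -/
/-- second moment of the Morris-style counter:
`E[α^{2z_{n+1}}] = E[α^{2z_n}] + (α²-1)·E[α^{2z_n}/(α^{z_n}+1)] ≤ E[α^{2z_n}] + (α²-1)·E[α^{z_n}]`. -/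
theorem morris_counter_second_moment
    (α δ : ℝ) (s c : ℕ) (q : ℕ → ℕ → ℝ)
    (hα : 1 < α) (hδ0 : 0 < δ) (hδ1 : δ < 1)
    (hs : (s : ℝ) = 1 / (δ * (α - 1)))
    (hcval : α ^ c = 1 / δ + 1)
    (hinit : ∀ j, q s j = if j = c then 1 else 0)
    (hrec : ∀ n, s ≤ n → ∀ k,
      q (n + 1) k = (if k = 0 then 0 else q n (k - 1) * (1 / (α ^ (k - 1) + 1)))
        + q n k * (1 - 1 / (α ^ k + 1)))
    (hnn : ∀ n j, 0 ≤ q n j)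
    (hlow : ∀ n j, j < c → q n j = 0)
    (hhigh : ∀ n j, s ≤ n → c + (n - s) < j → q n j = 0)
    (htot : ∀ n, s ≤ n → ∑ j ∈ Finset.range (c + n + 1), q n j = 1) :
    ∀ n, s ≤ n →
      ((∑ j ∈ Finset.range (c + (n + 1) + 1), q (n + 1) j * α ^ (2 * j))
          = (∑ j ∈ Finset.range (c + n + 1), q n j * α ^ (2 * j))
            + (α ^ 2 - 1) *
              ∑ j ∈ Finset.range (c + n + 1), q n j * (α ^ (2 * j) / (α ^ j + 1)))
      ∧ (∑ j ∈ Finset.range (c + (n + 1) + 1), q (n + 1) j * α ^ (2 * j))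
          ≤ (∑ j ∈ Finset.range (c + n + 1), q n j * α ^ (2 * j))
            + (α ^ 2 - 1) * ∑ j ∈ Finset.range (c + n + 1), q n j * α ^ j := by
  intro n hn
  have hα0 : (0:ℝ) < α := lt_trans one_pos hα
  have hpow : ∀ j : ℕ, (0:ℝ) < α ^ j + 1 := fun j => by positivity
  have hqtop : q n (c + n + 1) = 0 := hhigh n (c + n + 1) hn (by omega)
  have key : (∑ j ∈ Finset.range (c + (n + 1) + 1), q (n + 1) j * α ^ (2 * j))
      = (∑ j ∈ Finset.range (c + n + 1), q n j * α ^ (2 * j))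
        + (α ^ 2 - 1) *
          ∑ j ∈ Finset.range (c + n + 1), q n j * (α ^ (2 * j) / (α ^ j + 1)) := by
    have h1 : ∀ k ∈ Finset.range (c + (n + 1) + 1), q (n + 1) k * α ^ (2 * k)
        = (if k = 0 then 0 else q n (k - 1) * (1 / (α ^ (k - 1) + 1))) * α ^ (2 * k)
          + q n k * (1 - 1 / (α ^ k + 1)) * α ^ (2 * k) := by
      intro k _
      rw [hrec n hn k]; ring
    rw [Finset.sum_congr rfl h1, Finset.sum_add_distrib]
    have e1 : (∑ k ∈ Finset.range (c + (n + 1) + 1),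
        (if k = 0 then 0 else q n (k - 1) * (1 / (α ^ (k - 1) + 1))) * α ^ (2 * k))
        = ∑ j ∈ Finset.range (c + n + 1),
            q n j * (1 / (α ^ j + 1)) * α ^ (2 * (j + 1)) := by
      have hcn : c + (n + 1) + 1 = (c + n + 1) + 1 := by ring
      rw [hcn, Finset.sum_range_succ']
      simp
    have e2 : (∑ k ∈ Finset.range (c + (n + 1) + 1),
        q n k * (1 - 1 / (α ^ k + 1)) * α ^ (2 * k))
        = ∑ k ∈ Finset.range (c + n + 1), q n k * (1 - 1 / (α ^ k + 1)) * α ^ (2 * k) := by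
      have hcn : c + (n + 1) + 1 = (c + n + 1) + 1 := by ring
      rw [hcn, Finset.sum_range_succ, hqtop]; ring
    rw [e1, e2, ← Finset.sum_add_distrib, Finset.mul_sum, ← Finset.sum_add_distrib]
    apply Finset.sum_congr rfl
    intro j _
    have h0 : α ^ j + 1 ≠ 0 := ne_of_gt (hpow j)
    have h2 : α ^ (2 * (j + 1)) = α ^ (2 * j) * α ^ 2 := by
      rw [← pow_add]; ring_nf
    have h3 : α ^ (2 * j) = α ^ j * α ^ j := by rw [← pow_add]; ring_nf
    field_simp
    rw [h2, h3]
    ring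
  refine ⟨key, ?_⟩
  rw [key]
  have hle : (∑ j ∈ Finset.range (c + n + 1), q n j * (α ^ (2 * j) / (α ^ j + 1)))
      ≤ ∑ j ∈ Finset.range (c + n + 1), q n j * α ^ j := by
    apply Finset.sum_le_sum
    intro j _
    apply mul_le_mul_of_nonneg_left _ (hnn n j)
    rw [div_le_iff₀ (hpow j)]
    have h3 : α ^ (2 * j) = α ^ j * α ^ j := by rw [← pow_add]; ring_nf
    rw [h3]
    nlinarith [pow_pos hα0 j]
  have hα2 : (0:ℝ) ≤ α ^ 2 - 1 := by nlinarith
  have := mul_le_mul_of_nonneg_left hle hα2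
  linarith
end

section
/- In the deterministic doubling-timer network, if the input x fires in round t₀, then for each layer i ≥ 1 the second counting neuron a_{i,2} fires exactly in rounds t₀ + ℓ·2^i + i − 1 for ℓ = 1, …, ⌊t̂/2^i⌋. In particular, the top-layer neuron a_{log t̂, 2} fires for the first time in round t₀ + t̂ + log t̂ − 1. -/
/-- indicator of a boolean, as an integer (used for membrane potentials) -/
def b2z (x : Bool) : ℤ := if x then 1 else 0

theorem b2z_false : b2z false = 0 := rfl

/-!
Until the top neuron `a_{m,2}` fires for the first time its global reset term vanishes, and
every layer runs as a plain threshold circuit. Layer 1 is a 2-cycle, so `a_{1,2}` is a pulse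
train of period 2 starting at `t₀ + 2`. A layer fed by a pulse train of period `p ≥ 2` and
phase `s` has its latch set by the odd-numbered input pulses and reset one round after the
even-numbered ones, so its output is the pulse train of period `2p` and phase `s + 1`.
Induction on the layers, valid up to any horizon before the first top firing, combined with
strong induction on that horizon, shows that the top neuron is silent until
`t₀ + 2^m + m - 1`, and then the layer patterns hold up to that round.
-/

def PulseTrain (p s τ : ℕ) : Prop := ∃ ℓ, 1 ≤ ℓ ∧ τ = s + ℓ * p

/-- A latch set by the odd-numbered pulses of `PulseTrain p s` and reset one round after the
even-numbered ones is on exactly in these rounds. -/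
def LatchWindow (p s τ : ℕ) : Prop := ∃ k, s + (2 * k + 1) * p < τ ∧ τ ≤ s + (2 * k + 2) * p + 1

section Arithmetic

variable {p s τ : ℕ}

theorem not_pulseTrain_of_le (hp : 0 < p) (h : τ ≤ s) : ¬ PulseTrain p s τ := by
  rintro ⟨ℓ, hℓ, rfl⟩
  have : 0 < ℓ * p := Nat.mul_pos hℓ hp
  omega

theorem not_latchWindow_of_le (h : τ ≤ s) : ¬ LatchWindow p s τ := by
  rintro ⟨k, hk, -⟩
  omega

theorem pulseTrain_mul_two_succ_iff (hp : 2 ≤ p) :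
    PulseTrain (p * 2) (s + 1) (τ + 1) ↔ PulseTrain p s τ ∧ LatchWindow p s τ := by
  constructor
  · rintro ⟨ℓ, hℓ, h⟩
    obtain ⟨k, rfl⟩ : ∃ k, ℓ = k + 1 := ⟨ℓ - 1, by omega⟩
    exact ⟨⟨2 * k + 2, by omega, by linarith⟩, ⟨k, by nlinarith, by linarith⟩⟩
  · rintro ⟨⟨ℓ, -, rfl⟩, ⟨k, hlo, hhi⟩⟩
    have hlo' : (2 * k + 1) < ℓ := Nat.lt_of_mul_lt_mul_right (a := p) (by omega)
    have hhi' : ℓ < 2 * k + 3 := Nat.lt_of_mul_lt_mul_right (a := p) (by nlinarith)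
    obtain rfl : ℓ = 2 * k + 2 := by omega
    exact ⟨k + 1, by omega, by ring⟩

theorem latchWindow_succ_iff (hp : 0 < p) :
    LatchWindow p s (τ + 1) ↔
      PulseTrain p s τ ∨ (LatchWindow p s τ ∧ ¬ PulseTrain (p * 2) (s + 1) τ) := by
  constructor
  · rintro ⟨k, hlo, hhi⟩
    by_cases hτ : τ = s + (2 * k + 1) * p
    · exact Or.inl ⟨2 * k + 1, by omega, hτ⟩
    refine Or.inr ⟨⟨k, by omega, by omega⟩, ?_⟩
    rintro ⟨ℓ, -, rfl⟩
    have h1 : 2 * k + 1 ≤ ℓ * 2 :=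
      Nat.le_of_mul_le_mul_right (c := p) (by ring_nf at *; omega) hp
    have h2 : ℓ * 2 < 2 * k + 2 := Nat.lt_of_mul_lt_mul_right (a := p) (by linarith)
    omega
  · rintro (⟨ℓ, hℓ, rfl⟩ | ⟨⟨k, hlo, hhi⟩, hoff⟩)
    · rcases Nat.even_or_odd' ℓ with ⟨k, rfl | rfl⟩
      · obtain ⟨k, rfl⟩ : ∃ j, k = j + 1 := ⟨k - 1, by omega⟩
        exact ⟨k, by nlinarith, by linarith⟩
      · exact ⟨k, by omega, by nlinarith⟩
    · have hne : τ ≠ s + (2 * k + 2) * p + 1 := fun h => hoff ⟨k + 1, by omega, by linarith⟩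
      exact ⟨k, by omega, by omega⟩

theorem not_pulseTrain_mul_two_succ (hp : 2 ≤ p) (h : PulseTrain p s τ) :
    ¬ PulseTrain (p * 2) (s + 1) τ := by
  obtain ⟨ℓ, -, rfl⟩ := h
  rintro ⟨k, -, hk⟩
  have hlt : ℓ * p < (k * 2 + 1) * p := by linarith
  have hgt : k * 2 * p < ℓ * p := by linarith
  have := Nat.lt_of_mul_lt_mul_right hlt
  have := Nat.lt_of_mul_lt_mul_right hgt
  omega

end Arithmetic

section Circuits

variable {p s t N : ℕ}

theorem latch_pattern {u L d : ℕ → Bool} (hp : 2 ≤ p) (hts : t ≤ s)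
    (hL₀ : L t = false) (hd₀ : d t = false)
    (hL : ∀ τ, t ≤ τ → τ < N →
      L (τ + 1) = decide ((1 : ℤ) ≤ b2z (u τ) + b2z (L τ) - b2z (d τ)))
    (hd : ∀ τ, t ≤ τ → τ < N → d (τ + 1) = decide ((2 : ℤ) ≤ b2z (u τ) + b2z (L τ)))
    (hu : ∀ τ, t ≤ τ → τ ≤ N → (u τ = true ↔ PulseTrain p s τ)) :
    ∀ τ, t ≤ τ → τ ≤ N →
      (L τ = true ↔ LatchWindow p s τ) ∧ (d τ = true ↔ PulseTrain (p * 2) (s + 1) τ) := by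
  intro τ htτ
  induction τ, htτ using Nat.le_induction with
  | base =>
    intro _
    simp only [hL₀, hd₀, Bool.false_eq_true, false_iff]
    exact ⟨not_latchWindow_of_le hts, not_pulseTrain_of_le (by omega) (by omega)⟩
  | succ τ htτ ih =>
    intro hτN
    obtain ⟨ihL, ihd⟩ := ih (by omega)
    have hu' := hu τ htτ (by omega)
    -- the inhibitor never fires together with the input, so the latch is a plain set/reset
    have hud : ¬ (u τ = true ∧ d τ = true) := fun h =>
      not_pulseTrain_mul_two_succ hp (hu'.1 h.1) (ihd.1 h.2)
    rw [hL τ htτ (by omega), hd τ htτ (by omega), latchWindow_succ_iff (by omega),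
      pulseTrain_mul_two_succ_iff hp, ← hu', ← ihL, ← ihd]
    revert hud
    cases u τ <;> cases L τ <;> cases d τ <;> decide

theorem halving_layer_output {u L o d : ℕ → Bool} (hp : 2 ≤ p) (hts : t ≤ s)
    (hL₀ : L t = false) (ho₀ : o t = false) (hd₀ : d t = false)
    (hL : ∀ τ, t ≤ τ → τ < N →
      L (τ + 1) = decide ((1 : ℤ) ≤ b2z (u τ) + b2z (L τ) - b2z (d τ)))
    (ho : ∀ τ, t ≤ τ → τ < N → o (τ + 1) = decide ((2 : ℤ) ≤ b2z (u τ) + b2z (L τ)))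
    (hd : ∀ τ, t ≤ τ → τ < N → d (τ + 1) = decide ((2 : ℤ) ≤ b2z (u τ) + b2z (L τ)))
    (hu : ∀ τ, t ≤ τ → τ ≤ N → (u τ = true ↔ PulseTrain p s τ)) :
    ∀ τ, t ≤ τ → τ ≤ N → (o τ = true ↔ PulseTrain (p * 2) (s + 1) τ) := by
  intro τ htτ hτN
  have hod : o τ = d τ := by
    rcases htτ.eq_or_lt with rfl | hlt
    · rw [ho₀, hd₀]
    obtain ⟨τ, rfl⟩ : ∃ σ, τ = σ + 1 := ⟨τ - 1, by omega⟩
    rw [ho τ (by omega) (by omega), hd τ (by omega) (by omega)]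
  rw [hod]
  exact (latch_pattern hp hts hL₀ hd₀ hL hd hu τ htτ hτN).2

theorem ring_oscillator_pattern {x A B : ℕ → Bool} (hx : ∀ τ, x τ = decide (τ = t))
    (hA₀ : A t = false) (hB₀ : B t = false)
    (hA : ∀ τ, t ≤ τ → τ < N → A (τ + 1) = decide ((1 : ℤ) ≤ 3 * b2z (x τ) + b2z (B τ)))
    (hB : ∀ τ, t ≤ τ → τ < N → B (τ + 1) = decide ((1 : ℤ) ≤ b2z (A τ))) :
    ∀ τ, t ≤ τ → τ ≤ N →
      (A τ = true ↔ ∃ k, τ = t + 2 * k + 1) ∧ (B τ = true ↔ PulseTrain 2 t τ) := by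
  have hor (a b : Bool) : decide ((1 : ℤ) ≤ 3 * b2z a + b2z b) = (a || b) := by
    cases a <;> cases b <;> decide
  have hcopy (a : Bool) : decide ((1 : ℤ) ≤ b2z a) = a := by cases a <;> decide
  intro τ htτ
  induction τ, htτ using Nat.le_induction with
  | base =>
    intro _
    simp only [hA₀, hB₀, Bool.false_eq_true, false_iff, not_exists]
    exact ⟨fun k => by omega, not_pulseTrain_of_le (by omega) le_rfl⟩
  | succ τ htτ ih =>
    intro hτN
    obtain ⟨ihA, ihB⟩ := ih (by omega)
    rw [hA τ htτ (by omega), hB τ htτ (by omega), hor, hcopy, ihA, Bool.or_eq_true, hx,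
      decide_eq_true_iff, ihB]
    constructor
    · constructor
      · rintro (rfl | ⟨ℓ, -, rfl⟩)
        · exact ⟨0, rfl⟩
        · exact ⟨ℓ, by ring⟩
      · rintro ⟨_ | k, hk⟩
        · exact Or.inl (by omega)
        · exact Or.inr ⟨k + 1, by omega, by omega⟩
    · constructor
      · rintro ⟨k, rfl⟩
        exact ⟨k + 1, by omega, by ring⟩
      · rintro ⟨ℓ, hℓ, h⟩
        exact ⟨ℓ - 1, by omega⟩

end Circuits

structure DoublingTimer (m t₀ : ℕ) (x : ℕ → Bool) (a1 a2 d : ℕ → ℕ → Bool) : Prop where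
  input : ∀ τ, x τ = decide (τ = t₀)
  quiet : ∀ i τ, τ ≤ t₀ → a1 i τ = false ∧ a2 i τ = false ∧ d i τ = false
  a11_succ : ∀ τ, a1 1 (τ + 1) =
    decide ((1 : ℤ) ≤ 3 * b2z (x τ) + b2z (a2 1 τ) - 2 * b2z (a2 m τ))
  a12_succ : ∀ τ, a2 1 (τ + 1) = decide ((1 : ℤ) ≤ b2z (a1 1 τ) - 2 * b2z (a2 m τ))
  a1_succ : ∀ i τ, 2 ≤ i → i ≤ m → a1 i (τ + 1) =
    decide ((1 : ℤ) ≤ b2z (a2 (i - 1) τ) + b2z (a1 i τ) - b2z (d i τ) - 2 * b2z (a2 m τ))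
  a2_succ : ∀ i τ, 2 ≤ i → i ≤ m → a2 i (τ + 1) =
    decide ((2 : ℤ) ≤ b2z (a2 (i - 1) τ) + b2z (a1 i τ) - 2 * b2z (a2 m τ))
  d_succ : ∀ i τ, 2 ≤ i → i ≤ m → d i (τ + 1) =
    decide ((2 : ℤ) ≤ b2z (a2 (i - 1) τ) + b2z (a1 i τ))

namespace DoublingTimer

variable {m t₀ N : ℕ} {x : ℕ → Bool} {a1 a2 d : ℕ → ℕ → Bool}

theorem layer_pattern_one (net : DoublingTimer m t₀ x a1 a2 d) (hN : ∀ τ < N, a2 m τ = false) :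
    ∀ τ, t₀ ≤ τ → τ ≤ N → (a2 1 τ = true ↔ PulseTrain 2 t₀ τ) := by
  obtain ⟨hA₀, hB₀, -⟩ := net.quiet 1 t₀ le_rfl
  refine fun τ htτ hτN => (ring_oscillator_pattern net.input hA₀ hB₀ ?_ ?_ τ htτ hτN).2
  · intro τ _ hτ
    rw [net.a11_succ, hN τ hτ, b2z_false, mul_zero, sub_zero]
  · intro τ _ hτ
    rw [net.a12_succ, hN τ hτ, b2z_false, mul_zero, sub_zero]

theorem layer_pattern_succ (net : DoublingTimer m t₀ x a1 a2 d) (hN : ∀ τ < N, a2 m τ = false)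
    {i : ℕ} (hi : 1 ≤ i) (him : i + 1 ≤ m)
    (hprev : ∀ τ, t₀ ≤ τ → τ ≤ N → (a2 i τ = true ↔ PulseTrain (2 ^ i) (t₀ + i - 1) τ)) :
    ∀ τ, t₀ ≤ τ → τ ≤ N →
      (a2 (i + 1) τ = true ↔ PulseTrain (2 ^ (i + 1)) (t₀ + (i + 1) - 1) τ) := by
  obtain ⟨hL₀, ho₀, hd₀⟩ := net.quiet (i + 1) t₀ le_rfl
  rw [pow_succ, show t₀ + (i + 1) - 1 = t₀ + i - 1 + 1 by omega]
  refine halving_layer_output (le_self_pow₀ one_le_two (by omega)) (by omega) hL₀ ho₀ hd₀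
    ?_ ?_ ?_ hprev
  · intro τ _ hτ
    rw [net.a1_succ (i + 1) τ (by omega) him, hN τ hτ, b2z_false, mul_zero, sub_zero,
      Nat.add_sub_cancel]
  · intro τ _ hτ
    rw [net.a2_succ (i + 1) τ (by omega) him, hN τ hτ, b2z_false, mul_zero, sub_zero,
      Nat.add_sub_cancel]
  · intro τ _ _
    rw [net.d_succ (i + 1) τ (by omega) him, Nat.add_sub_cancel]

theorem layer_pattern (net : DoublingTimer m t₀ x a1 a2 d) (hN : ∀ τ < N, a2 m τ = false)
    {i : ℕ} (hi : 1 ≤ i) (him : i ≤ m) :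
    ∀ τ, t₀ ≤ τ → τ ≤ N → (a2 i τ = true ↔ PulseTrain (2 ^ i) (t₀ + i - 1) τ) := by
  induction i, hi using Nat.le_induction with
  | base => simpa using net.layer_pattern_one hN
  | succ i hi ih => exact net.layer_pattern_succ hN hi him (ih (by omega))

theorem top_silent_before (net : DoublingTimer m t₀ x a1 a2 d) (hm : 1 ≤ m) :
    ∀ τ < t₀ + 2 ^ m + m - 1, a2 m τ = false := by
  intro τ
  induction τ using Nat.strong_induction_on with
  | _ τ ih =>
    intro hτ
    rcases le_or_gt τ t₀ with hτ₀ | hτ₀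
    · exact (net.quiet m τ hτ₀).2.1
    refine Bool.eq_false_iff.2 fun hfire => ?_
    obtain ⟨ℓ, hℓ, rfl⟩ := (net.layer_pattern (fun σ hσ => ih σ hσ (by omega)) hm le_rfl
      τ hτ₀.le le_rfl).1 hfire
    have : 2 ^ m ≤ ℓ * 2 ^ m := Nat.le_mul_of_pos_left _ hℓ
    omega

end DoublingTimer

/-- in the deterministic doubling-timer network with `m = log t̂` layers
(`t̂ = 2^m`), if the input `x` fires (only) in round `t₀`, each layer-`i` neuron `a_{i,2}`
fires in rounds `t₀ + ℓ·2^i + i - 1` for `ℓ = 1,…,⌊t̂/2^i⌋`; in particular the top neuron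
`a_{m,2}` fires for the first time in round `t₀ + t̂ + m - 1`. -/
theorem det_timer_layer_firing
    (m t₀ : ℕ) (hm : 1 ≤ m)
    (x : ℕ → Bool) (a1 a2 d : ℕ → ℕ → Bool)
    (hx : ∀ τ, x τ = decide (τ = t₀))
    (hquiet : ∀ i τ, τ ≤ t₀ → a1 i τ = false ∧ a2 i τ = false ∧ d i τ = false)
    (ha11 : ∀ τ, a1 1 (τ + 1) =
      decide ((1 : ℤ) ≤ 3 * b2z (x τ) + b2z (a2 1 τ) - 2 * b2z (a2 m τ)))
    (ha12 : ∀ τ, a2 1 (τ + 1) =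
      decide ((1 : ℤ) ≤ b2z (a1 1 τ) - 2 * b2z (a2 m τ)))
    (ha1 : ∀ i τ, 2 ≤ i → i ≤ m → a1 i (τ + 1) =
      decide ((1 : ℤ) ≤ b2z (a2 (i - 1) τ) + b2z (a1 i τ) - b2z (d i τ)
        - 2 * b2z (a2 m τ)))
    (ha2 : ∀ i τ, 2 ≤ i → i ≤ m → a2 i (τ + 1) =
      decide ((2 : ℤ) ≤ b2z (a2 (i - 1) τ) + b2z (a1 i τ) - 2 * b2z (a2 m τ)))
    (hd : ∀ i τ, 2 ≤ i → i ≤ m → d i (τ + 1) =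
      decide ((2 : ℤ) ≤ b2z (a2 (i - 1) τ) + b2z (a1 i τ))) :
    (∀ i ℓ : ℕ, 1 ≤ i → i ≤ m → 1 ≤ ℓ → ℓ ≤ 2 ^ m / 2 ^ i →
        a2 i (t₀ + ℓ * 2 ^ i + i - 1) = true) ∧
    (∀ τ, τ < t₀ + 2 ^ m + m - 1 → a2 m τ = false) ∧
    a2 m (t₀ + 2 ^ m + m - 1) = true := by
  have net : DoublingTimer m t₀ x a1 a2 d := ⟨hx, hquiet, ha11, ha12, ha1, ha2, hd⟩
  have silent := net.top_silent_before hm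
  refine ⟨fun i ℓ hi him hℓ hℓm => ?_, silent, ?_⟩
  · have hfit : ℓ * 2 ^ i ≤ 2 ^ m := (Nat.le_div_iff_mul_le (by positivity)).1 hℓm
    exact (net.layer_pattern silent hi him (t₀ + ℓ * 2 ^ i + i - 1) (by omega) (by omega)).2
      ⟨ℓ, hℓ, by omega⟩
  · have : 0 < 2 ^ m := by positivity
    exact (net.layer_pattern silent hm le_rfl (t₀ + 2 ^ m + m - 1) (by omega) le_rfl).2
      ⟨1, le_rfl, by omega⟩
end

section
/- Implementing a NOT-gate in the asynchronous spiking model with maximum edge latency L requires at least log₂(2L) bits of state beyond the input: any network with N = o(log L) auxiliary neurons (fewer than log₂(L/2) + 1, i.e., at most L/2 distinct auxiliary states) fails. Formally: if all edges out of the input x have latency L, all other latencies are 1, and the network of N neurons has 2^N ≤ L/2 states, then there is no round T and network such that (a) when x fires in rounds [0, L+1] the output never fires in [1, L+1], and (b) when x never fires the output fires at some round in [0, T]. -/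
/-- no asynchronous NOT-gate with few neurons. The auxiliary state evolves
as `s(τ+1) = F (s τ) (input signal arriving at round τ)`, where spikes of `x` travel with
latency `L` (so `x` firing in rounds `[0, L+1]` is seen during rounds `[L, 2L+1]`).
If `2^N ≤ L/2` then there are no `F`, `out`, round bound `T` such that:
(a) in the yes-run (`x` fires in `[0, L+1]`) the output never fires in rounds `[0, L+1]`,
yet (b) in the no-run (`x` never fires) the output fires at some round in `[0, T]`. -/
theorem async_not_gate_lower_bound
    (N L T : ℕ) (hN : 2 ^ N ≤ L / 2) (hL : 2 ≤ L)
    (F : (Fin N → Bool) → Bool → (Fin N → Bool))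
    (out : (Fin N → Bool) → Bool)
    (syes sno : ℕ → (Fin N → Bool))
    (hyes0 : syes 0 = fun _ => false) (hno0 : sno 0 = fun _ => false)
    (hyes : ∀ τ, syes (τ + 1) = F (syes τ) (decide (L ≤ τ ∧ τ ≤ 2 * L + 1)))
    (hno : ∀ τ, sno (τ + 1) = F (sno τ) false)
    (ha : ∀ τ, τ ≤ L + 1 → out (syes τ) = false) :
    ¬ ∃ τ : ℕ, τ ≤ T ∧ out (sno τ) = true := by
  -- runs agree up to round L
  have hagree : ∀ τ, τ ≤ L → syes τ = sno τ := by
    intro τ hτ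
    induction τ with
    | zero => rw [hyes0, hno0]
    | succ t ih =>
      have ht : t < L := Nat.lt_of_succ_le hτ
      rw [hyes t, hno t, ih (Nat.le_of_lt ht)]
      have : ¬ (L ≤ t ∧ t ≤ 2 * L + 1) := fun h => absurd h.1 (Nat.not_le.2 ht)
      simp [this]
  have hfalse : ∀ τ, τ ≤ L → out (sno τ) = false := by
    intro τ hτ
    rw [← hagree τ hτ]
    exact ha τ (Nat.le_succ_of_le hτ)
  -- pigeonhole on rounds 0..L/2
  have hcard : Fintype.card (Fin N → Bool) < Fintype.card (Fin (L / 2 + 1)) := by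
    simpa using Nat.lt_succ_of_le hN
  obtain ⟨a, b, hab, heq⟩ :=
    Fintype.exists_ne_map_eq_of_card_lt (fun k : Fin (L / 2 + 1) => sno k.val) hcard
  -- wlog a < b
  obtain ⟨i, j, hij, hjle, hrep⟩ : ∃ i j : ℕ, i < j ∧ j ≤ L / 2 ∧ sno i = sno j := by
    rcases Nat.lt_or_ge a.val b.val with h | h
    · exact ⟨a.val, b.val, h, Nat.lt_succ_iff.1 b.isLt, heq⟩
    · have h' : b.val < a.val :=
        lt_of_le_of_ne h (fun he => hab (Fin.ext he.symm))
      exact ⟨b.val, a.val, h', Nat.lt_succ_iff.1 a.isLt, heq.symm⟩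
  -- periodicity: sno (i + d) = sno (j + d)
  have hper : ∀ d, sno (i + d) = sno (j + d) := by
    intro d
    induction d with
    | zero => simpa using hrep
    | succ d ih =>
      have h1 : i + (d + 1) = (i + d) + 1 := by ring
      have h2 : j + (d + 1) = (j + d) + 1 := by ring
      rw [h1, h2, hno, hno, ih]
  -- every state equals some state at round ≤ L
  have hred : ∀ τ, ∃ τ' ≤ L, sno τ = sno τ' := by
    intro τ
    induction τ using Nat.strong_induction_on with
    | _ τ ih =>
      rcases le_or_gt τ L with h | h
      · exact ⟨τ, h, rfl⟩
      · have hjτ : j ≤ τ := le_trans (le_trans hjle (Nat.div_le_self L 2)) h.le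
        obtain ⟨d, hd⟩ := Nat.exists_eq_add_of_le hjτ
        have hlt : i + d < τ := by omega
        obtain ⟨τ', hτ', he⟩ := ih (i + d) hlt
        exact ⟨τ', hτ', by rw [hd, ← hper d, he]⟩
  rintro ⟨τ, -, hout⟩
  obtain ⟨τ', hτ', he⟩ := hred τ
  rw [he, hfalse τ' hτ'] at hout
  exact Bool.false_ne_true hout
end

section
/- By induction along layers of the asynchronous timer: if the input x fires in round τ₀, then for every i ≥ 1 the neuron a_{i,2} fires for the first time during the interval [τ₀ + 2^i·2L, τ₀ + 2^i·8L²] and fires every τ_i rounds with τ_i ∈ [2^i·2L, 2^i·4L²]. Consequently, with t' = t/(2L) layers, the output fires in some round τ ∈ [τ₀ + t, τ₀ + 5Lt]. -/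
/-- induction along the layers of the asynchronous timer. `f i` and `T i`
are the first-firing round and firing period of `a_{i,2}`; the base case and the layer
recurrence (from the layer lemma) imply `f i ∈ [τ₀ + 2^i·2L, τ₀ + 2^i·8L²]` and
`T i ∈ [2^i·2L, 2^i·4L²]` for all `i ≥ 1`; with `t = 2L·2^m` (i.e. `t' = t/(2L) = 2^m`
layers) and an output edge of latency at most `L`, the output fires in some round
`τ ∈ [τ₀ + t, τ₀ + 5Lt]`. -/
theorem async_timer_induction
    (L t τ₀ m : ℕ) (hL : 1 ≤ L) (hm : 1 ≤ m)
    (f T : ℕ → ℕ)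
    (ht : t = 2 * L * 2 ^ m)
    (hbase_f : τ₀ + 4 * L ≤ f 1 ∧ f 1 ≤ τ₀ + 4 * L ^ 2 + L)
    (hbase_T : 4 * L ≤ T 1 ∧ T 1 ≤ 4 * L ^ 2 + L)
    (hrec_f : ∀ i, 1 ≤ i →
      f i + T i + 1 ≤ f (i + 1) ∧ f (i + 1) ≤ f i + T i + L ^ 2 + L)
    (hrec_T : ∀ i, 1 ≤ i →
      2 * T i ≤ T (i + 1) ∧ T (i + 1) ≤ 2 * T i + L ^ 2 + L)
    (out : ℕ) (hout : f m ≤ out ∧ out ≤ f m + L) :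
    (∀ i, 1 ≤ i →
      (τ₀ + 2 ^ i * (2 * L) ≤ f i ∧ f i ≤ τ₀ + 2 ^ i * (8 * L ^ 2)) ∧
      (2 ^ i * (2 * L) ≤ T i ∧ T i ≤ 2 ^ i * (4 * L ^ 2))) ∧
    (τ₀ + t ≤ out ∧ out ≤ τ₀ + 5 * L * t) := by
  have hLL : L ≤ L ^ 2 := by nlinarith
  -- strengthened invariant
  have key : ∀ i, 1 ≤ i →
      (τ₀ + 2 ^ i * (2 * L) ≤ f i ∧ f i ≤ τ₀ + 2 ^ i * (8 * L ^ 2)) ∧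
      (2 ^ i * (2 * L) ≤ T i ∧ T i + (L ^ 2 + L) ≤ 2 ^ i * (4 * L ^ 2)) := by
    intro i hi
    induction i, hi using Nat.le_induction with
    | base =>
      obtain ⟨hb1, hb2⟩ := hbase_f
      obtain ⟨hc1, hc2⟩ := hbase_T
      have h1 : (2:ℕ) ^ 1 = 2 := rfl
      rw [h1]
      refine ⟨⟨by omega, by linarith⟩, ⟨by omega, by linarith⟩⟩
    | succ i hi ih =>
      obtain ⟨⟨hf1, hf2⟩, hT1, hT2⟩ := ih
      obtain ⟨hrf1, hrf2⟩ := hrec_f i hi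
      obtain ⟨hrT1, hrT2⟩ := hrec_T i hi
      have h2 : (2:ℕ) ≤ 2 ^ i := by
        calc (2:ℕ) = 2 ^ 1 := rfl
          _ ≤ 2 ^ i := Nat.pow_le_pow_right (by norm_num) hi
      have hp : (2:ℕ) ^ (i + 1) = 2 * 2 ^ i := by rw [pow_succ]; ring
      rw [hp]
      generalize hq : (2:ℕ) ^ i = p at *
      refine ⟨⟨by linarith, by linarith⟩, ⟨by linarith, by linarith⟩⟩
  obtain ⟨⟨hfm1, hfm2⟩, -, hTm2⟩ := key m hm
  obtain ⟨ho1, ho2⟩ := hout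
  have h2m : (2:ℕ) ≤ 2 ^ m := by
    calc (2:ℕ) = 2 ^ 1 := rfl
      _ ≤ 2 ^ m := Nat.pow_le_pow_right (by norm_num) hm
  refine ⟨fun i hi => ⟨(key i hi).1, (key i hi).2.1, by
      have := (key i hi).2.2; omega⟩, ?_, ?_⟩
  · have : τ₀ + t = τ₀ + 2 ^ m * (2 * L) := by rw [ht]; ring
    omega
  · have h5 : τ₀ + 5 * L * t = τ₀ + 2 ^ m * (10 * L ^ 2) := by rw [ht]; ring
    rw [h5]
    have hstep : 2 * (2 * L ^ 2) ≤ 2 ^ m * (2 * L ^ 2) := Nat.mul_le_mul_right _ h2m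
    generalize hq : (2:ℕ) ^ m = p at *
    linarith
end
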